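/- Let G be a group and 𝓘 a group bornology on G. The family of entourages ε_A = {(x,y) ∈ G × G : y ∈ {x} ∪ Ax} for A ∈ 𝓘 is a base of a coarse structure 𝓔_𝓘 on G, and a subset B ⊆ G is bounded in (G, 𝓔_𝓘) if and only if B ∈ 𝓘. -/

import Mathlib

open Pointwise

/-
Writing `ε_A` as `{(x, y) : y x⁻¹ ∈ {1} ∪ A}` turns entourage algebra into set arithmetic in `G`:
`ε_A ∘ ε_B⁻¹ ⊆ ε_C` with `C = ({1} ∪ B)⁻¹ ({1} ∪ A)`, and the ball `ε_A[x]` is `({1} ∪ A) x`.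
Both sets lie in `𝓘` because a group bornology is closed under products and inverses, and every
`B ∈ 𝓘` lies in the ball `ε_B[1] = {1} ∪ B`.
-/

def IsIdeal {X : Type*} (I : Set (Set X)) : Prop :=
  ∅ ∈ I ∧ (∀ A ∈ I, ∀ B : Set X, B ⊆ A → B ∈ I) ∧ (∀ A ∈ I, ∀ B ∈ I, A ∪ B ∈ I)

def IsBornology {X : Type*} (B : Set (Set X)) : Prop :=
  IsIdeal B ∧ (∀ A : Set X, A.Finite → A ∈ B) ∧ ⋃₀ B = Set.univ

def IsGroupBornology {G : Type*} [Group G] (I : Set (Set G)) : Prop :=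
  IsBornology I ∧ ∀ A ∈ I, ∀ B ∈ I, A * B⁻¹ ∈ I

def relComp {X : Type*} (ε δ : Set (X × X)) : Set (X × X) :=
  {p | ∃ y, (p.1, y) ∈ ε ∧ (y, p.2) ∈ δ}

def relInv {X : Type*} (ε : Set (X × X)) : Set (X × X) :=
  {p | (p.2, p.1) ∈ ε}

def IsBallStructure {X : Type*} (E : Set (Set (X × X))) : Prop :=
  (∀ ε ∈ E, Set.diagonal _ ⊆ ε) ∧
  (∀ ε ∈ E, ∀ δ ∈ E, ∃ lam ∈ E, relComp ε (relInv δ) ⊆ lam) ∧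
  ⋃₀ E = Set.univ

def IsCoarseStructure {X : Type*} (E : Set (Set (X × X))) : Prop :=
  IsBallStructure E ∧
  ∀ ε ∈ E, ∀ δ : Set (X × X), Set.diagonal _ ⊆ δ → δ ⊆ ε → δ ∈ E

def ball {X : Type*} (ε : Set (X × X)) (x : X) : Set X :=
  {y | (x, y) ∈ ε}

def IsBoundedIn {X : Type*} (E : Set (Set (X × X))) (B : Set X) : Prop :=
  B = ∅ ∨ ∃ x : X, ∃ ε ∈ E, B ⊆ ball ε x

/-- The entourage `ε_A = {(x,y) : y ∈ {x} ∪ Ax}` determined by `A ⊆ G`. -/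
def entOf {G : Type*} [Group G] (A : Set G) : Set (G × G) :=
  {p | p.2 = p.1 ∨ ∃ a ∈ A, p.2 = a * p.1}

/-- The coarse structure `𝓔_𝓘` on a group determined by a group bornology `𝓘`. -/
def EI {G : Type*} [Group G] (I : Set (Set G)) : Set (Set (G × G)) :=
  {δ | Set.diagonal _ ⊆ δ ∧ ∃ A ∈ I, δ ⊆ entOf A}

namespace IsGroupBornology

variable {G : Type*} [Group G] {I : Set (Set G)}

theorem empty_mem (h : IsGroupBornology I) : ∅ ∈ I :=
  h.1.1.1

theorem union_mem (h : IsGroupBornology I) {A B : Set G} (hA : A ∈ I) (hB : B ∈ I) :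
    A ∪ B ∈ I :=
  h.1.1.2.2 A hA B hB

theorem mem_of_subset (h : IsGroupBornology I) {A B : Set G} (hA : A ∈ I) (hBA : B ⊆ A) :
    B ∈ I :=
  h.1.1.2.1 A hA B hBA

theorem singleton_mem (h : IsGroupBornology I) (x : G) : {x} ∈ I :=
  h.1.2.1 {x} (Set.finite_singleton x)

theorem inv_mem (h : IsGroupBornology I) {A : Set G} (hA : A ∈ I) : A⁻¹ ∈ I := by
  simpa using h.2 {1} (h.singleton_mem 1) A hA

theorem mul_mem (h : IsGroupBornology I) {A B : Set G} (hA : A ∈ I) (hB : B ∈ I) :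
    A * B ∈ I := by
  simpa using h.2 A hA B⁻¹ (h.inv_mem hB)

theorem insert_one_mem (h : IsGroupBornology I) {A : Set G} (hA : A ∈ I) : insert 1 A ∈ I :=
  h.union_mem (h.singleton_mem 1) hA

end IsGroupBornology

theorem relComp_relInv_mono {X : Type*} {ε ε' δ δ' : Set (X × X)} (hε : ε ⊆ ε') (hδ : δ ⊆ δ') :
    relComp ε (relInv δ) ⊆ relComp ε' (relInv δ') :=
  fun _ ⟨y, hxy, hzy⟩ => ⟨y, hε hxy, hδ hzy⟩

section entOf

variable {G : Type*} [Group G]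

theorem mem_entOf_iff {A : Set G} {p : G × G} : p ∈ entOf A ↔ p.2 * p.1⁻¹ ∈ insert 1 A := by
  rw [Set.mem_insert_iff, mul_inv_eq_one]
  refine or_congr_right ⟨?_, fun hp => ⟨_, hp, by group⟩⟩
  rintro ⟨a, ha, hp⟩
  simpa [hp] using ha

theorem diagonal_subset_entOf (A : Set G) : Set.diagonal G ⊆ entOf A := by
  rintro ⟨x, y⟩ (rfl : x = y)
  exact Or.inl rfl

theorem relComp_entOf_relInv_entOf_subset (A B : Set G) :
    relComp (entOf A) (relInv (entOf B)) ⊆ entOf ((insert 1 B)⁻¹ * insert 1 A) := by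
  rintro ⟨x, z⟩ ⟨y, hxy, hzy : (z, y) ∈ entOf B⟩
  rw [mem_entOf_iff] at hxy hzy ⊢
  have hzx : z * x⁻¹ = (y * z⁻¹)⁻¹ * (y * x⁻¹) := by group
  rw [hzx]
  exact Or.inr (Set.mul_mem_mul (Set.inv_mem_inv.mpr hzy) hxy)

theorem ball_entOf (A : Set G) (x : G) : ball (entOf A) x = insert 1 A * {x} := by
  ext y
  simp only [ball, Set.mem_ofPred_eq, mem_entOf_iff, Set.mul_singleton, Set.mem_image]
  exact ⟨fun hy => ⟨_, hy, by group⟩, by rintro ⟨a, ha, rfl⟩; simpa using ha⟩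

end entOf

section EI

variable {G : Type*} [Group G] {I : Set (Set G)}

theorem entOf_mem_EI {A : Set G} (hA : A ∈ I) : entOf A ∈ EI I :=
  ⟨diagonal_subset_entOf A, A, hA, subset_rfl⟩

theorem isCoarseStructure_EI (h : IsGroupBornology I) : IsCoarseStructure (EI I) := by
  refine ⟨⟨fun ε hε => hε.1, ?_, ?_⟩, ?_⟩
  · rintro ε ⟨-, A, hA, hεA⟩ δ ⟨-, B, hB, hδB⟩
    exact ⟨_, entOf_mem_EI (h.mul_mem (h.inv_mem (h.insert_one_mem hB)) (h.insert_one_mem hA)),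
      (relComp_relInv_mono hεA hδB).trans (relComp_entOf_relInv_entOf_subset A B)⟩
  · refine Set.eq_univ_of_forall fun p => ⟨_, entOf_mem_EI (h.singleton_mem (p.2 * p.1⁻¹)), ?_⟩
    rw [mem_entOf_iff]
    exact Or.inr rfl
  · rintro ε ⟨-, A, hA, hεA⟩ δ hδ hδε
    exact ⟨hδ, A, hA, hδε.trans hεA⟩

theorem isBoundedIn_EI_iff (h : IsGroupBornology I) (B : Set G) :
    IsBoundedIn (EI I) B ↔ B ∈ I := by
  constructor
  · rintro (rfl | ⟨x, ε, ⟨-, A, hA, hεA⟩, hB⟩)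
    · exact h.empty_mem
    · refine h.mem_of_subset (h.mul_mem (h.insert_one_mem hA) (h.singleton_mem x)) ?_
      rw [← ball_entOf]
      exact fun y hy => hεA (hB hy)
  · intro hB
    refine Or.inr ⟨1, entOf B, entOf_mem_EI hB, ?_⟩
    rw [ball_entOf, Set.singleton_one, mul_one]
    exact Set.subset_insert 1 B

end EI

theorem stmt12 {G : Type*} [Group G] (𝓘 : Set (Set G))
    (h : IsGroupBornology 𝓘) :
    IsCoarseStructure (EI 𝓘) ∧
    (∀ δ ∈ EI 𝓘, ∃ A ∈ 𝓘, δ ⊆ entOf A) ∧ (∀ A ∈ 𝓘, entOf A ∈ EI 𝓘) ∧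
    ∀ B : Set G, IsBoundedIn (EI 𝓘) B ↔ B ∈ 𝓘 :=
  ⟨isCoarseStructure_EI h, fun _ hδ => hδ.2, fun _ => entOf_mem_EI, isBoundedIn_EI_iff h⟩
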